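/- The family of 2^{m+2}−1 matrices consisting of E_0, E_1, E_{β,1} (β ∈ F, β ≠ 0), E_{α,2} (α ∈ F), E_{β,3} (β ∈ F, β ≠ 0), and E_{β,4} (β ∈ F, β ≠ 0) is a complete system of pairwise orthogonal symmetric idempotents, i.e., each member E satisfies E² = E and Eᵀ = E, the product of any two distinct members is the zero matrix, and the sum of all members is I_{(q+2)q²}. (They are the primitive idempotents of the symmetric association scheme formed by the matrices A_{α,i}.) -/
import Mathlib


open Matrix Kronecker

/-- The `q × q` permutation matrix `φ(α)` with `(x,y)`-entry `1` iff `y = x + α`. -/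
noncomputable def phi {F : Type*} [Add F] [DecidableEq F] (α : F) : Matrix F F ℝ :=
  Matrix.of fun x y => if y = x + α then (1 : ℝ) else 0

/-- The all-ones matrix. -/
noncomputable def Jmat (n : Type*) : Matrix n n ℝ :=
  Matrix.of fun _ _ => (1 : ℝ)

/-- The auxiliary matrix `C_{a,α'}` with `((β,x),(β',y))`-entry `1` iff
`y = x + a(β+β') + α'`. -/
noncomputable def Cmat {F : Type*} [Field F] [DecidableEq F] (a α' : F) :
    Matrix (F × F) (F × F) ℝ :=
  Matrix.of fun p p' => if p'.2 = p.2 + a * (p.1 + p'.1) + α' then (1 : ℝ) else 0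

/-- Embedding of `F ∪ {y}` into `S = F ∪ {x, y}`, coded as `Option F → F ⊕ Bool`
(`none ↦ y = Sum.inr true`; the symbol `x` is `Sum.inr false`). -/
def emb {F : Type*} : Option F → F ⊕ Bool :=
  fun o => o.elim (Sum.inr true) Sum.inl

/-- `C_{a,α}` for `a ∈ F ∪ {y}`, where `C_{y,α} = φ(α) ⊗ J_q`. -/
noncomputable def CmatE {F : Type*} [Field F] [DecidableEq F] (a : Option F) (α : F) :
    Matrix (F × F) (F × F) ℝ :=
  a.elim (phi α ⊗ₖ Jmat F) (fun b => Cmat b α)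

/-- `N_α = Σ_{a ∈ F ∪ {y}} P_a ⊗ C_{a,α}`. -/
noncomputable def Nmat {F : Type*} [Field F] [Fintype F] [DecidableEq F]
    (P : F ⊕ Bool → Matrix (F ⊕ Bool) (F ⊕ Bool) ℝ) (α : F) :
    Matrix ((F ⊕ Bool) × F × F) ((F ⊕ Bool) × F × F) ℝ :=
  ∑ a : Option F, P (emb a) ⊗ₖ CmatE a α

/-- The matrices `A_{α,0}, A_{α,1}, A_{α,2}, A_{α,3}`:
`A_{α,0} = I_{(q+2)q} ⊗ φ(α)`, `A_{α,1} = I_{q+2} ⊗ C_{y,α}`,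
`A_{α,2} = P_y ⊗ C_{y,α}`, `A_{α,3} = N_α − P_y ⊗ C_{y,α}`. -/
noncomputable def Amat {F : Type*} [Field F] [Fintype F] [DecidableEq F]
    (P : F ⊕ Bool → Matrix (F ⊕ Bool) (F ⊕ Bool) ℝ) (α : F) :
    Fin 4 → Matrix ((F ⊕ Bool) × F × F) ((F ⊕ Bool) × F × F) ℝ :=
  ![(1 : Matrix (F ⊕ Bool) (F ⊕ Bool) ℝ) ⊗ₖ ((1 : Matrix F F ℝ) ⊗ₖ phi α),
    (1 : Matrix (F ⊕ Bool) (F ⊕ Bool) ℝ) ⊗ₖ (phi α ⊗ₖ Jmat F),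
    P (Sum.inr true) ⊗ₖ (phi α ⊗ₖ Jmat F),
    Nmat P α - P (Sum.inr true) ⊗ₖ (phi α ⊗ₖ Jmat F)]

/-- `F_{α,i} = Σ_{γ ∈ F} χ_α(γ) • A_{γ,i}`. -/
noncomputable def Fmat {F : Type*} [Field F] [Fintype F] [DecidableEq F]
    (χ : F → F → ℝ) (P : F ⊕ Bool → Matrix (F ⊕ Bool) (F ⊕ Bool) ℝ) (α : F) (i : Fin 4) :
    Matrix ((F ⊕ Bool) × F × F) ((F ⊕ Bool) × F × F) ℝ :=
  ∑ γ : F, χ α γ • Amat P γ i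

/-- `E_0 = (1/((q+2)q²))·(F_{0,1}+F_{0,2}+F_{0,3})`. -/
noncomputable def Emat0 {F : Type*} [Field F] [Fintype F] [DecidableEq F] (q : ℝ)
    (χ : F → F → ℝ) (P : F ⊕ Bool → Matrix (F ⊕ Bool) (F ⊕ Bool) ℝ) :
    Matrix ((F ⊕ Bool) × F × F) ((F ⊕ Bool) × F × F) ℝ :=
  ((q + 2) * q ^ 2)⁻¹ • (Fmat χ P 0 1 + Fmat χ P 0 2 + Fmat χ P 0 3)

/-- `E_1 = (1/((q+2)q²))·((q/2)(F_{0,1}+F_{0,2}) − F_{0,3})`. -/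
noncomputable def Emat1 {F : Type*} [Field F] [Fintype F] [DecidableEq F] (q : ℝ)
    (χ : F → F → ℝ) (P : F ⊕ Bool → Matrix (F ⊕ Bool) (F ⊕ Bool) ℝ) :
    Matrix ((F ⊕ Bool) × F × F) ((F ⊕ Bool) × F × F) ℝ :=
  ((q + 2) * q ^ 2)⁻¹ • ((q / 2) • (Fmat χ P 0 1 + Fmat χ P 0 2) - Fmat χ P 0 3)

/-- `E_{α,1} = (1/(2q²))·(F_{α,1}+F_{α,2})`. -/
noncomputable def EmatA1 {F : Type*} [Field F] [Fintype F] [DecidableEq F] (q : ℝ)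
    (χ : F → F → ℝ) (P : F ⊕ Bool → Matrix (F ⊕ Bool) (F ⊕ Bool) ℝ) (α : F) :
    Matrix ((F ⊕ Bool) × F × F) ((F ⊕ Bool) × F × F) ℝ :=
  (2 * q ^ 2)⁻¹ • (Fmat χ P α 1 + Fmat χ P α 2)

/-- `E_{α,2} = (1/(2q²))·(F_{α,1}−F_{α,2})`. -/
noncomputable def EmatA2 {F : Type*} [Field F] [Fintype F] [DecidableEq F] (q : ℝ)
    (χ : F → F → ℝ) (P : F ⊕ Bool → Matrix (F ⊕ Bool) (F ⊕ Bool) ℝ) (α : F) :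
    Matrix ((F ⊕ Bool) × F × F) ((F ⊕ Bool) × F × F) ℝ :=
  (2 * q ^ 2)⁻¹ • (Fmat χ P α 1 - Fmat χ P α 2)

/-- `E_{α,3} = (1/(2q²))·(q·F_{α,0}+F_{α,3})`. -/
noncomputable def EmatA3 {F : Type*} [Field F] [Fintype F] [DecidableEq F] (q : ℝ)
    (χ : F → F → ℝ) (P : F ⊕ Bool → Matrix (F ⊕ Bool) (F ⊕ Bool) ℝ) (α : F) :
    Matrix ((F ⊕ Bool) × F × F) ((F ⊕ Bool) × F × F) ℝ :=
  (2 * q ^ 2)⁻¹ • (q • Fmat χ P α 0 + Fmat χ P α 3)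

/-- `E_{α,4} = (1/(2q²))·(q·F_{α,0}−F_{α,3})`. -/
noncomputable def EmatA4 {F : Type*} [Field F] [Fintype F] [DecidableEq F] (q : ℝ)
    (χ : F → F → ℝ) (P : F ⊕ Bool → Matrix (F ⊕ Bool) (F ⊕ Bool) ℝ) (α : F) :
    Matrix ((F ⊕ Bool) × F × F) ((F ⊕ Bool) × F × F) ℝ :=
  (2 * q ^ 2)⁻¹ • (q • Fmat χ P α 0 - Fmat χ P α 3)

/-- Index set for the family of idempotents
`E_0, E_1, E_{β,1} (β≠0), E_{α,2} (α∈F), E_{β,3} (β≠0), E_{β,4} (β≠0)`. -/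
abbrev EIdx (F : Type*) [Zero F] :=
  Unit ⊕ Unit ⊕ {β : F // β ≠ 0} ⊕ F ⊕ {β : F // β ≠ 0} ⊕ {β : F // β ≠ 0}

/-- The family `E_0, E_1, E_{β,1} (β≠0), E_{α,2} (α∈F), E_{β,3} (β≠0), E_{β,4} (β≠0)`. -/
noncomputable def Efam {F : Type*} [Field F] [Fintype F] [DecidableEq F] (q : ℝ)
    (χ : F → F → ℝ) (P : F ⊕ Bool → Matrix (F ⊕ Bool) (F ⊕ Bool) ℝ) :
    EIdx F → Matrix ((F ⊕ Bool) × F × F) ((F ⊕ Bool) × F × F) ℝ :=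
  Sum.elim (fun _ => Emat0 q χ P)
    (Sum.elim (fun _ => Emat1 q χ P)
      (Sum.elim (fun b => EmatA1 q χ P b.1)
        (Sum.elim (fun a => EmatA2 q χ P a)
          (Sum.elim (fun b => EmatA3 q χ P b.1) (fun b => EmatA4 q χ P b.1)))))

set_option linter.unusedSectionVars false
set_option linter.unusedVariables false

namespace Stmt17

variable {F : Type*} [Field F] [Fintype F] [DecidableEq F]

/-- Bundled hypotheses on the character table `χ` plus characteristic 2. -/
structure Good (χ : F → F → ℝ) : Prop where
  val : ∀ α β, χ α β = 1 ∨ χ α β = -1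
  symm : ∀ α β, χ α β = χ β α
  hmul : ∀ α β β', χ α (β + β') = χ α β * χ α β'
  hsum : ∀ α, α ≠ 0 → ∑ γ : F, χ α γ = 0
  char2 : ∀ x : F, x + x = 0

variable {χ : F → F → ℝ}

theorem Good.sq (h : Good χ) (α β : F) : χ α β * χ α β = 1 := by
  rcases h.val α β with e | e <;> rw [e] <;> norm_num

theorem Good.zero (h : Good χ) (α : F) : χ α 0 = 1 := by
  have := h.hmul α 0 0
  rw [add_zero] at this
  rcases h.val α 0 with e | e
  · exact e
  · rw [e] at this; norm_num at this

theorem Good.zero' (h : Good χ) (β : F) : χ 0 β = 1 := by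
  rw [h.symm]; exact h.zero β

theorem add_eq_zero_iff (h2 : ∀ x : F, x + x = 0) {a b : F} : a + b = 0 ↔ a = b := by
  constructor
  · intro hab
    have : a + b + b = b := by rw [hab, zero_add]
    rwa [add_assoc, h2 b, add_zero] at this
  · rintro rfl; exact h2 _

theorem eq_add_iff (h2 : ∀ x : F, x + x = 0) {a b c : F} : a = b + c ↔ c = b + a := by
  constructor
  · rintro rfl
    rw [← add_assoc, h2 b, zero_add]
  · rintro rfl
    rw [← add_assoc, h2 b, zero_add]

theorem Good.sum_ite (h : Good χ) (α : F) :
    ∑ γ : F, χ α γ = if α = 0 then (Fintype.card F : ℝ) else 0 := by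
  split_ifs with hα
  · subst hα
    simp [h.zero']
  · exact h.hsum α hα

theorem Good.prod_eq (h : Good χ) (α α' γ : F) : χ α γ * χ α' γ = χ (α + α') γ := by
  rw [h.symm α γ, h.symm α' γ, ← h.hmul γ α α', h.symm]

theorem Good.sum_mul (h : Good χ) (α α' : F) :
    ∑ γ : F, χ α γ * χ α' γ = if α = α' then (Fintype.card F : ℝ) else 0 := by
  have : ∀ γ : F, χ α γ * χ α' γ = χ (α + α') γ := fun γ => h.prod_eq α α' γ
  rw [Finset.sum_congr rfl fun γ _ => this γ, h.sum_ite]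
  congr 1
  simp only [eq_iff_iff]
  exact add_eq_zero_iff h.char2

theorem Good.sum_scaled (h : Good χ) (α : F) {c : F} (hc : c ≠ 0) :
    ∑ γ : F, χ α (c * γ) = if α = 0 then (Fintype.card F : ℝ) else 0 := by
  rw [← h.sum_ite α]
  exact Fintype.sum_equiv (Equiv.mulLeft₀ c hc) _ _ fun γ => rfl

/-- The matrix `Φ_α` with entries `χ_α(x+y)`. -/
noncomputable def PhiM (χ : F → F → ℝ) (α : F) : Matrix F F ℝ :=
  Matrix.of fun x y => χ α (x + y)

/-- The rank-one matrix `R_{α,b}` with entries `χ_α(bx)·χ_α(by)`. -/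
noncomputable def RM (χ : F → F → ℝ) (α b : F) : Matrix F F ℝ :=
  Matrix.of fun x y => χ α (b * x) * χ α (b * y)

theorem PhiM_zero (h : Good χ) : PhiM χ 0 = Jmat F := by
  ext x y; simp [PhiM, Jmat, h.zero']

theorem RM_zero (h : Good χ) (b : F) : RM χ 0 b = PhiM χ 0 := by
  ext x y; simp [RM, PhiM, h.zero']

theorem PhiM_transpose (χ : F → F → ℝ) (α : F) : (PhiM χ α)ᵀ = PhiM χ α := by
  ext x y; simp [PhiM, add_comm]

theorem RM_transpose (χ : F → F → ℝ) (α b : F) : (RM χ α b)ᵀ = RM χ α b := by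
  ext x y; simp [RM, mul_comm]

theorem Phi_mul (h : Good χ) (α α' : F) :
    PhiM χ α * PhiM χ α' = (if α = α' then (Fintype.card F : ℝ) else 0) • PhiM χ α' := by
  ext x y
  simp only [Matrix.mul_apply, PhiM, Matrix.smul_apply, Matrix.of_apply, smul_eq_mul]
  have e1 : ∀ z : F, χ α (x + z) * χ α' (z + y) = (χ α z * χ α' z) * (χ α x * χ α' y) := by
    intro z
    rw [h.hmul α x z, h.hmul α' z y]
    ring
  rw [Finset.sum_congr rfl fun z _ => e1 z, ← Finset.sum_mul, h.sum_mul, h.hmul α' x y]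
  split_ifs with haa
  · subst haa; ring
  · ring

theorem Phi_mul_self (h : Good χ) (α : F) :
    PhiM χ α * PhiM χ α = (Fintype.card F : ℝ) • PhiM χ α := by
  rw [Phi_mul h, if_pos rfl]

theorem Phi_mul_ne (h : Good χ) {α α' : F} (hne : α ≠ α') :
    PhiM χ α * PhiM χ α' = 0 := by
  rw [Phi_mul h, if_neg hne, zero_smul]

theorem Phi_sum (h : Good χ) : ∑ α : F, PhiM χ α = (Fintype.card F : ℝ) • 1 := by
  ext x y
  simp only [Matrix.sum_apply, PhiM, Matrix.smul_apply, Matrix.of_apply, Matrix.one_apply,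
    smul_eq_mul]
  have e1 : ∀ α : F, χ α (x + y) = χ (x + y) α := fun α => h.symm α (x + y)
  rw [Finset.sum_congr rfl fun α _ => e1 α, h.sum_ite]
  by_cases hxy : x = y
  · subst hxy
    rw [if_pos (h.char2 x), if_pos rfl, mul_one]
  · rw [if_neg (fun hc => hxy ((add_eq_zero_iff h.char2).mp hc)), if_neg hxy, mul_zero]

theorem RM_mul (h : Good χ) {α : F} (hα : α ≠ 0) (b b' : F) :
    RM χ α b * RM χ α b' = (if b = b' then (Fintype.card F : ℝ) else 0) • RM χ α b' := by
  ext x y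
  simp only [Matrix.mul_apply, RM, Matrix.smul_apply, Matrix.of_apply, smul_eq_mul]
  have e1 : ∀ z : F, (χ α (b * x) * χ α (b * z)) * (χ α (b' * z) * χ α (b' * y)) =
      χ α ((b + b') * z) * (χ α (b * x) * χ α (b' * y)) := by
    intro z
    rw [add_mul, h.hmul α (b * z) (b' * z)]
    ring
  rw [Finset.sum_congr rfl fun z _ => e1 z, ← Finset.sum_mul]
  by_cases hbb : b = b'
  · subst hbb
    rw [if_pos rfl]
    have : b * (1:F) + b * 1 = 0 := h.char2 _
    have hz : ∀ z : F, χ α ((b + b) * z) = 1 := by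
      intro z
      have : (b + b) = 0 := h.char2 b
      rw [this, zero_mul, h.zero]
    rw [Finset.sum_congr rfl fun z _ => hz z]
    simp [Finset.card_univ]
  · rw [if_neg hbb]
    have hc : b + b' ≠ 0 := fun hc => hbb ((add_eq_zero_iff h.char2).mp hc)
    rw [h.sum_scaled α hc, if_neg hα, zero_mul, zero_mul]

theorem RM_sum (h : Good χ) {α : F} (hα : α ≠ 0) :
    ∑ b : F, RM χ α b = (Fintype.card F : ℝ) • 1 := by
  ext x y
  simp only [Matrix.sum_apply, RM, Matrix.smul_apply, Matrix.of_apply, Matrix.one_apply,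
    smul_eq_mul]
  have e1 : ∀ b : F, χ α (b * x) * χ α (b * y) = χ α ((x + y) * b) := by
    intro b
    rw [← h.hmul, ← mul_add, mul_comm b (x+y)]
  rw [Finset.sum_congr rfl fun b _ => e1 b]
  by_cases hxy : x = y
  · subst hxy
    have : x + x = 0 := h.char2 x
    rw [Finset.sum_congr rfl fun b _ => by rw [this, zero_mul, h.zero]]
    simp [Finset.card_univ]
  · have hc : x + y ≠ 0 := fun hc => hxy ((add_eq_zero_iff h.char2).mp hc)
    rw [h.sum_scaled α hc, if_neg hα, if_neg hxy, mul_zero]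

end Stmt17
namespace Stmt17
section
variable {F : Type*} [Field F] [Fintype F] [DecidableEq F]
variable {χ : F → F → ℝ} (P : F ⊕ Bool → Matrix (F ⊕ Bool) (F ⊕ Bool) ℝ)

theorem kron_sum_smul {ι l m n p : Type*} [Fintype n] [Fintype ι] [DecidableEq l]
    (A : Matrix l m ℝ) (c : ι → ℝ) (B : ι → Matrix n p ℝ) :
    ∑ i : ι, c i • (A ⊗ₖ B i) = A ⊗ₖ (∑ i : ι, c i • B i) := by
  ext ⟨i, j⟩ ⟨k, l⟩
  simp only [Matrix.sum_apply, Matrix.smul_apply, kroneckerMap_apply, smul_eq_mul,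
    Finset.mul_sum]
  exact Finset.sum_congr rfl fun x _ => by ring

theorem kron_smul_sum {ι l m n p : Type*} [Fintype n] [Fintype ι] [DecidableEq l]
    (A : Matrix n p ℝ) (c : ι → ℝ) (B : ι → Matrix l m ℝ) :
    ∑ i : ι, c i • (B i ⊗ₖ A) = (∑ i : ι, c i • B i) ⊗ₖ A := by
  ext ⟨i, j⟩ ⟨k, l⟩
  simp only [Matrix.sum_apply, Matrix.smul_apply, kroneckerMap_apply, smul_eq_mul,
    Finset.sum_mul]
  exact Finset.sum_congr rfl fun x _ => by ring

theorem sum_kron {ι l m n p : Type*} [Fintype n] [Fintype ι] [DecidableEq l]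
    (A : Matrix n p ℝ) (B : ι → Matrix l m ℝ) :
    ∑ i : ι, (B i ⊗ₖ A) = (∑ i : ι, B i) ⊗ₖ A := by
  ext ⟨i, j⟩ ⟨k, l⟩
  simp [Matrix.sum_apply, kroneckerMap_apply, Finset.sum_mul]

theorem kron_sum_right {ι l m n p : Type*} [Fintype n] [Fintype ι] [DecidableEq l]
    (A : Matrix l m ℝ) (B : ι → Matrix n p ℝ) :
    ∑ i : ι, A ⊗ₖ B i = A ⊗ₖ (∑ i : ι, B i) := by
  ext ⟨i, j⟩ ⟨k, l⟩
  simp [Matrix.sum_apply, kroneckerMap_apply, Finset.mul_sum]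

theorem kron_sum_right' {ι l m n p : Type*} [Fintype n] [Fintype ι] [DecidableEq l]
    (A : Matrix n p ℝ) (B : ι → Matrix l m ℝ) :
    ∑ i : ι, B i ⊗ₖ A = (∑ i : ι, B i) ⊗ₖ A := by
  ext ⟨i, j⟩ ⟨k, l⟩
  simp [Matrix.sum_apply, kroneckerMap_apply, Finset.sum_mul]

theorem phi_fourier (h : Good χ) (α : F) :
    ∑ γ : F, χ α γ • phi γ = PhiM χ α := by
  ext x y
  simp only [Matrix.sum_apply, Matrix.smul_apply, phi, Matrix.of_apply, smul_eq_mul, PhiM]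
  have e1 : ∀ γ : F, χ α γ * (if y = x + γ then (1:ℝ) else 0) =
      if γ = x + y then χ α γ else 0 := by
    intro γ
    rw [if_congr (eq_add_iff h.char2) rfl rfl]
    split_ifs <;> simp
  rw [Finset.sum_congr rfl fun γ _ => e1 γ, Finset.sum_ite_eq' Finset.univ (x + y) (χ α)]
  simp

theorem Cmat_fourier (h : Good χ) (α b : F) :
    ∑ γ : F, χ α γ • Cmat b γ = RM χ α b ⊗ₖ PhiM χ α := by
  ext ⟨β, x⟩ ⟨β', y⟩
  simp only [Matrix.sum_apply, Matrix.smul_apply, Cmat, Matrix.of_apply, smul_eq_mul,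
    kroneckerMap_apply, RM, PhiM]
  have e1 : ∀ γ : F, χ α γ * (if y = x + b * (β + β') + γ then (1:ℝ) else 0) =
      if γ = x + b * (β + β') + y then χ α γ else 0 := by
    intro γ
    rw [if_congr (eq_add_iff h.char2) rfl rfl]
    split_ifs <;> simp
  rw [Finset.sum_congr rfl fun γ _ => e1 γ,
    Finset.sum_ite_eq' Finset.univ (x + b * (β + β') + y) (χ α), if_pos (Finset.mem_univ _)]
  rw [mul_add, h.hmul α (x + (b * β + b * β')) y, h.hmul α x (b * β + b * β'),
    h.hmul α (b * β) (b * β'), h.hmul α x y]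
  ring

/-- `G0 α = 1 ⊗ (1 ⊗ Φ_α)`. -/
noncomputable def G0 (χ : F → F → ℝ) (α : F) :
    Matrix ((F ⊕ Bool) × F × F) ((F ⊕ Bool) × F × F) ℝ :=
  (1 : Matrix (F ⊕ Bool) (F ⊕ Bool) ℝ) ⊗ₖ ((1 : Matrix F F ℝ) ⊗ₖ PhiM χ α)

/-- `G1 α = 1 ⊗ (Φ_α ⊗ Φ_0)`. -/
noncomputable def G1 (χ : F → F → ℝ) (α : F) :
    Matrix ((F ⊕ Bool) × F × F) ((F ⊕ Bool) × F × F) ℝ :=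
  (1 : Matrix (F ⊕ Bool) (F ⊕ Bool) ℝ) ⊗ₖ (PhiM χ α ⊗ₖ PhiM χ 0)

/-- `G2 α = P_y ⊗ (Φ_α ⊗ Φ_0)`. -/
noncomputable def G2 (χ : F → F → ℝ) (P : F ⊕ Bool → Matrix (F ⊕ Bool) (F ⊕ Bool) ℝ)
    (α : F) : Matrix ((F ⊕ Bool) × F × F) ((F ⊕ Bool) × F × F) ℝ :=
  P (Sum.inr true) ⊗ₖ (PhiM χ α ⊗ₖ PhiM χ 0)

/-- `G3 α = Σ_b P_b ⊗ (R_{α,b} ⊗ Φ_α)`. -/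
noncomputable def G3 (χ : F → F → ℝ) (P : F ⊕ Bool → Matrix (F ⊕ Bool) (F ⊕ Bool) ℝ)
    (α : F) : Matrix ((F ⊕ Bool) × F × F) ((F ⊕ Bool) × F × F) ℝ :=
  ∑ b : F, P (Sum.inl b) ⊗ₖ (RM χ α b ⊗ₖ PhiM χ α)

theorem Amat_zero (γ : F) : Amat P γ 0 =
    (1 : Matrix (F ⊕ Bool) (F ⊕ Bool) ℝ) ⊗ₖ ((1 : Matrix F F ℝ) ⊗ₖ phi γ) := rfl

theorem Amat_one (γ : F) : Amat P γ 1 =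
    (1 : Matrix (F ⊕ Bool) (F ⊕ Bool) ℝ) ⊗ₖ (phi γ ⊗ₖ Jmat F) := rfl

theorem Amat_two (γ : F) : Amat P γ 2 =
    P (Sum.inr true) ⊗ₖ (phi γ ⊗ₖ Jmat F) := rfl

theorem Amat_three (γ : F) : Amat P γ 3 =
    Nmat P γ - P (Sum.inr true) ⊗ₖ (phi γ ⊗ₖ Jmat F) := rfl

theorem Fmat_eq0 (h : Good χ) (α : F) : Fmat χ P α 0 = G0 χ α := by
  unfold Fmat G0
  simp only [Amat_zero]
  rw [kron_sum_smul, kron_sum_smul, phi_fourier h]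

theorem Fmat_eq1 (h : Good χ) (α : F) : Fmat χ P α 1 = G1 χ α := by
  unfold Fmat G1
  simp only [Amat_one]
  rw [kron_sum_smul, kron_smul_sum, phi_fourier h, PhiM_zero h]

theorem Fmat_eq2 (h : Good χ) (α : F) : Fmat χ P α 2 = G2 χ P α := by
  unfold Fmat G2
  simp only [Amat_two]
  rw [kron_sum_smul, kron_smul_sum, phi_fourier h, PhiM_zero h]

theorem Nmat_split (γ : F) : Nmat P γ =
    P (Sum.inr true) ⊗ₖ (phi γ ⊗ₖ Jmat F) + ∑ b : F, P (Sum.inl b) ⊗ₖ Cmat b γ := by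
  unfold Nmat
  rw [Fintype.sum_option]
  rfl

theorem Fmat_eq3 (h : Good χ) (α : F) : Fmat χ P α 3 = G3 χ P α := by
  unfold Fmat G3
  simp only [Amat_three, Nmat_split, add_sub_cancel_left, Finset.smul_sum]
  rw [Finset.sum_comm]
  exact Finset.sum_congr rfl fun b _ => by rw [kron_sum_smul, Cmat_fourier h]

end
end Stmt17
namespace Stmt17
section
variable {F : Type*} [Field F] [Fintype F] [DecidableEq F]
variable {χ : F → F → ℝ} (P : F ⊕ Bool → Matrix (F ⊕ Bool) (F ⊕ Bool) ℝ)

/-- `K_W = W ⊗ (Φ_0 ⊗ Φ_0)`. -/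
noncomputable def KW (χ : F → F → ℝ) (W : Matrix (F ⊕ Bool) (F ⊕ Bool) ℝ) :
    Matrix ((F ⊕ Bool) × F × F) ((F ⊕ Bool) × F × F) ℝ :=
  W ⊗ₖ (PhiM χ 0 ⊗ₖ PhiM χ 0)

theorem G1_zero (χ : F → F → ℝ) : G1 χ (0 : F) = KW χ 1 := rfl

theorem G2_zero (χ : F → F → ℝ) : G2 χ P (0 : F) = KW χ (P (Sum.inr true)) := rfl

theorem Fmat3_zero (h : Good χ)
    (hPsum : ∑ a : F ⊕ Bool, P a = Jmat (F ⊕ Bool))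
    (hPx : P (Sum.inr false) = 1) :
    Fmat χ P 0 3 = KW χ (Jmat (F ⊕ Bool) - 1 - P (Sum.inr true)) := by
  rw [Fmat_eq3 P h]
  unfold G3 KW
  have hsum : ∑ b : F, P (Sum.inl b) = Jmat (F ⊕ Bool) - 1 - P (Sum.inr true) := by
    have := hPsum
    rw [Fintype.sum_sum_type, Fintype.sum_bool, hPx] at this
    rw [← this]; abel
  rw [Finset.sum_congr rfl fun b _ => by rw [RM_zero h], sum_kron, hsum]

/-- Zero lemma: product vanishes if the third slots are distinct `Φ`'s. -/
theorem Z1 (h : Good χ) {u v : F} (huv : u ≠ v)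
    (A C : Matrix (F ⊕ Bool) (F ⊕ Bool) ℝ) (B D : Matrix F F ℝ) :
    (A ⊗ₖ (B ⊗ₖ PhiM χ u)) * (C ⊗ₖ (D ⊗ₖ PhiM χ v)) = 0 := by
  rw [← mul_kronecker_mul, ← mul_kronecker_mul, Phi_mul_ne h huv, kronecker_zero, kronecker_zero]

/-- Zero lemma: product vanishes if the middle slots are distinct `Φ`'s. -/
theorem Z2 (h : Good χ) {u v : F} (huv : u ≠ v)
    (A C : Matrix (F ⊕ Bool) (F ⊕ Bool) ℝ) (B D : Matrix F F ℝ) :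
    (A ⊗ₖ (PhiM χ u ⊗ₖ B)) * (C ⊗ₖ (PhiM χ v ⊗ₖ D)) = 0 := by
  rw [← mul_kronecker_mul, ← mul_kronecker_mul, Phi_mul_ne h huv, zero_kronecker, kronecker_zero]

theorem mulKW (h : Good χ) (W W' : Matrix (F ⊕ Bool) (F ⊕ Bool) ℝ) :
    KW χ W * KW χ W' = ((Fintype.card F : ℝ) ^ 2) • KW χ (W * W') := by
  unfold KW
  simp only [← mul_kronecker_mul, Phi_mul_self h, kronecker_smul, smul_kronecker, smul_smul]
  rw [sq]

theorem KW_smul (χ : F → F → ℝ) (r : ℝ) (W : Matrix (F ⊕ Bool) (F ⊕ Bool) ℝ) :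
    KW χ (r • W) = r • KW χ W := by
  unfold KW; rw [smul_kronecker]

theorem mulG00 (h : Good χ) (α : F) :
    G0 χ α * G0 χ α = (Fintype.card F : ℝ) • G0 χ (α : F) := by
  unfold G0
  simp only [← mul_kronecker_mul, Phi_mul_self h, kronecker_smul, smul_kronecker, smul_smul,
    one_mul, mul_one]

theorem mulG11 (h : Good χ) (α : F) :
    G1 χ α * G1 χ α = ((Fintype.card F : ℝ) ^ 2) • G1 χ (α : F) := by
  unfold G1
  simp only [← mul_kronecker_mul, Phi_mul_self h, kronecker_smul, smul_kronecker, smul_smul,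
    one_mul, mul_one]
  rw [sq]

theorem mulG12 (h : Good χ) (α : F) :
    G1 χ α * G2 χ P α = ((Fintype.card F : ℝ) ^ 2) • G2 χ P (α : F) := by
  unfold G1 G2
  simp only [← mul_kronecker_mul, Phi_mul_self h, kronecker_smul, smul_kronecker, smul_smul,
    one_mul, mul_one]
  rw [sq]

theorem mulG21 (h : Good χ) (α : F) :
    G2 χ P α * G1 χ α = ((Fintype.card F : ℝ) ^ 2) • G2 χ P (α : F) := by
  unfold G1 G2
  simp only [← mul_kronecker_mul, Phi_mul_self h, kronecker_smul, smul_kronecker, smul_smul,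
    one_mul, mul_one]
  rw [sq]

theorem mulG22 (h : Good χ) (hPy : P (Sum.inr true) * P (Sum.inr true) = 1) (α : F) :
    G2 χ P α * G2 χ P α = ((Fintype.card F : ℝ) ^ 2) • G1 χ (α : F) := by
  unfold G1 G2
  simp only [← mul_kronecker_mul, Phi_mul_self h, hPy, kronecker_smul, smul_kronecker, smul_smul,
    one_mul, mul_one]
  rw [sq]

theorem mulG03 (h : Good χ) (α : F) :
    G0 χ α * G3 χ P α = (Fintype.card F : ℝ) • G3 χ P (α : F) := by
  unfold G0 G3
  rw [Finset.mul_sum, Finset.smul_sum]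
  refine Finset.sum_congr rfl fun b _ => ?_
  simp only [← mul_kronecker_mul, Phi_mul_self h, kronecker_smul, smul_kronecker, smul_smul,
    one_mul, mul_one]

theorem mulG30 (h : Good χ) (α : F) :
    G3 χ P α * G0 χ α = (Fintype.card F : ℝ) • G3 χ P (α : F) := by
  unfold G0 G3
  rw [Finset.sum_mul, Finset.smul_sum]
  refine Finset.sum_congr rfl fun b _ => ?_
  simp only [← mul_kronecker_mul, Phi_mul_self h, kronecker_smul, smul_kronecker, smul_smul,
    one_mul, mul_one]

theorem mulG33 (h : Good χ) {α : F} (hα : α ≠ 0)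
    (hPP : ∀ a, P a * P a = 1) :
    G3 χ P α * G3 χ P α = ((Fintype.card F : ℝ) ^ 3) • G0 χ (α : F) := by
  unfold G3
  rw [Finset.sum_mul]
  have e1 : ∀ b : F, (P (Sum.inl b) ⊗ₖ (RM χ α b ⊗ₖ PhiM χ α)) *
      (∑ b' : F, P (Sum.inl b') ⊗ₖ (RM χ α b' ⊗ₖ PhiM χ α)) =
      ((Fintype.card F : ℝ) ^ 2) •
        ((1 : Matrix (F ⊕ Bool) (F ⊕ Bool) ℝ) ⊗ₖ (RM χ α b ⊗ₖ PhiM χ α)) := by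
    intro b
    rw [Finset.mul_sum, Finset.sum_eq_single b]
    · simp only [← mul_kronecker_mul, Phi_mul_self h, RM_mul h hα, eq_self_iff_true, if_true, hPP _,
        kronecker_smul, smul_kronecker, smul_smul]
      rw [sq]
    · intro b' _ hb'
      simp only [← mul_kronecker_mul, RM_mul h hα, if_neg (Ne.symm hb'), zero_smul,
        zero_kronecker, kronecker_zero]
    · intro hb; exact absurd (Finset.mem_univ b) hb
  rw [Finset.sum_congr rfl fun b _ => e1 b, ← Finset.smul_sum]
  have e2 : ∑ b : F, (1 : Matrix (F ⊕ Bool) (F ⊕ Bool) ℝ) ⊗ₖ (RM χ α b ⊗ₖ PhiM χ α) =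
      (Fintype.card F : ℝ) • G0 χ α := by
    rw [kron_sum_right, kron_sum_right' , RM_sum h hα, smul_kronecker, kronecker_smul]
    rfl
  rw [e2, smul_smul, ← pow_succ]

/-- zero-product for `G3` on the right against a tensor with third slot `Φ_v`, `u ≠ v`. -/
theorem zG3r (h : Good χ) {u v : F} (huv : u ≠ v)
    (A : Matrix (F ⊕ Bool) (F ⊕ Bool) ℝ) (B : Matrix F F ℝ) :
    (A ⊗ₖ (B ⊗ₖ PhiM χ u)) * G3 χ P v = 0 := by
  unfold G3
  rw [Finset.mul_sum]
  refine Finset.sum_eq_zero fun b _ => Z1 h huv _ _ _ _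

theorem zG3l (h : Good χ) {u v : F} (huv : u ≠ v)
    (A : Matrix (F ⊕ Bool) (F ⊕ Bool) ℝ) (B : Matrix F F ℝ) :
    G3 χ P u * (A ⊗ₖ (B ⊗ₖ PhiM χ v)) = 0 := by
  unfold G3
  rw [Finset.sum_mul]
  refine Finset.sum_eq_zero fun b _ => Z1 h huv _ _ _ _

theorem zG33 (h : Good χ) {u v : F} (huv : u ≠ v) :
    G3 χ P u * G3 χ P v = 0 := by
  unfold G3
  rw [Finset.sum_mul]
  refine Finset.sum_eq_zero fun b _ => ?_
  rw [Finset.mul_sum]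
  refine Finset.sum_eq_zero fun b' _ => Z1 h huv _ _ _ _

theorem sumG0 (h : Good χ) :
    ∑ α : F, G0 χ α = (Fintype.card F : ℝ) • 1 := by
  unfold G0
  rw [kron_sum_right, kron_sum_right, Phi_sum h, kronecker_smul, kronecker_smul,
    one_kronecker_one, one_kronecker_one]

theorem sumG1 (h : Good χ) :
    ∑ α : F, G1 χ α = (Fintype.card F : ℝ) • G0 χ 0 := by
  unfold G1 G0
  rw [kron_sum_right, kron_sum_right', Phi_sum h, smul_kronecker, kronecker_smul]

theorem sumG2 (h : Good χ) :
    ∑ α : F, G2 χ P α = (Fintype.card F : ℝ) •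
      (P (Sum.inr true) ⊗ₖ ((1 : Matrix F F ℝ) ⊗ₖ PhiM χ 0)) := by
  unfold G2
  rw [kron_sum_right, kron_sum_right', Phi_sum h, smul_kronecker, kronecker_smul]

end
end Stmt17
namespace Stmt17
section
variable {F : Type*} [Field F] [Fintype F] [DecidableEq F]
variable {χ : F → F → ℝ} (P : F ⊕ Bool → Matrix (F ⊕ Bool) (F ⊕ Bool) ℝ)

theorem P_rowsum (hP01 : ∀ a i j, P a i j = 0 ∨ P a i j = 1)
    (hPsymm : ∀ a, (P a)ᵀ = P a) (hPperm : ∀ a, P a * (P a)ᵀ = 1)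
    (a : F ⊕ Bool) (i : F ⊕ Bool) : ∑ k, P a i k = 1 := by
  have h1 := congrFun (congrFun (hPperm a) i) i
  rw [Matrix.mul_apply, Matrix.one_apply_eq] at h1
  have h2 : ∀ k, P a i k * (P a)ᵀ k i = P a i k := by
    intro k
    rw [Matrix.transpose_apply]
    rcases hP01 a i k with h | h <;> rw [h] <;> ring
  rw [Finset.sum_congr rfl fun k _ => h2 k] at h1
  exact h1

theorem P_mul_J (hP01 : ∀ a i j, P a i j = 0 ∨ P a i j = 1)
    (hPsymm : ∀ a, (P a)ᵀ = P a) (hPperm : ∀ a, P a * (P a)ᵀ = 1) (a : F ⊕ Bool) :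
    P a * Jmat (F ⊕ Bool) = Jmat (F ⊕ Bool) := by
  ext i j
  rw [Matrix.mul_apply]
  simp only [Jmat, Matrix.of_apply, mul_one]
  exact P_rowsum P hP01 hPsymm hPperm a i

theorem J_mul_P (hP01 : ∀ a i j, P a i j = 0 ∨ P a i j = 1)
    (hPsymm : ∀ a, (P a)ᵀ = P a) (hPperm : ∀ a, P a * (P a)ᵀ = 1) (a : F ⊕ Bool) :
    Jmat (F ⊕ Bool) * P a = Jmat (F ⊕ Bool) := by
  ext i j
  rw [Matrix.mul_apply]
  simp only [Jmat, Matrix.of_apply, one_mul]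
  have : ∀ k, P a k j = P a j k := fun k => (congrFun (congrFun (hPsymm a) k) j).symm
  rw [Finset.sum_congr rfl fun k _ => this k]
  exact P_rowsum P hP01 hPsymm hPperm a j

theorem J_mul_J : Jmat (F ⊕ Bool) * Jmat (F ⊕ Bool) =
    ((Fintype.card F : ℝ) + 2) • Jmat (F ⊕ Bool) := by
  ext i j
  rw [Matrix.mul_apply]
  simp only [Jmat, Matrix.of_apply, mul_one, Matrix.smul_apply, smul_eq_mul]
  rw [Finset.sum_const, Finset.card_univ, Fintype.card_sum, Fintype.card_bool]
  push_cast
  ring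

theorem Jmat_transpose : (Jmat (F ⊕ Bool))ᵀ = Jmat (F ⊕ Bool) := rfl

/-- Matrix `P_y ⊗ (1 ⊗ Φ_0)`, appearing in `Σ_α G2 α`. -/
noncomputable def G2y (χ : F → F → ℝ) (P : F ⊕ Bool → Matrix (F ⊕ Bool) (F ⊕ Bool) ℝ) :
    Matrix ((F ⊕ Bool) × F × F) ((F ⊕ Bool) × F × F) ℝ :=
  P (Sum.inr true) ⊗ₖ ((1 : Matrix F F ℝ) ⊗ₖ PhiM χ 0)

theorem KW_sub (χ : F → F → ℝ) (W W' : Matrix (F ⊕ Bool) (F ⊕ Bool) ℝ) :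
    KW χ (W - W') = KW χ W - KW χ W' := by
  unfold KW
  ext ⟨i, j⟩ ⟨k, l⟩
  simp [kroneckerMap_apply, sub_mul]

theorem KW_add (χ : F → F → ℝ) (W W' : Matrix (F ⊕ Bool) (F ⊕ Bool) ℝ) :
    KW χ (W + W') = KW χ W + KW χ W' := by
  unfold KW
  ext ⟨i, j⟩ ⟨k, l⟩
  simp [kroneckerMap_apply, add_mul]

/-- Normal form of `E_0`. -/
theorem nf0 (h : Good χ)
    (hPsum : ∑ a : F ⊕ Bool, P a = Jmat (F ⊕ Bool))
    (hPx : P (Sum.inr false) = 1) :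
    Emat0 (Fintype.card F : ℝ) χ P =
      (((Fintype.card F : ℝ) + 2) * (Fintype.card F : ℝ) ^ 2)⁻¹ •
        KW χ (Jmat (F ⊕ Bool)) := by
  unfold Emat0
  rw [Fmat_eq1 P h, Fmat_eq2 P h, Fmat3_zero P h hPsum hPx, G1_zero, G2_zero P, KW_sub, KW_sub]
  congr 1
  abel

/-- Normal form of `E_1`. -/
theorem nf1 (h : Good χ)
    (hPsum : ∑ a : F ⊕ Bool, P a = Jmat (F ⊕ Bool))
    (hPx : P (Sum.inr false) = 1) :
    Emat1 (Fintype.card F : ℝ) χ P =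
      (((Fintype.card F : ℝ) + 2) * (Fintype.card F : ℝ) ^ 2)⁻¹ •
        (((Fintype.card F : ℝ) / 2 + 1) • (KW χ 1 + KW χ (P (Sum.inr true))) -
          KW χ (Jmat (F ⊕ Bool))) := by
  unfold Emat1
  rw [Fmat_eq1 P h, Fmat_eq2 P h, Fmat3_zero P h hPsum hPx, G1_zero, G2_zero P, KW_sub, KW_sub]
  congr 1
  module

theorem nfA1 (h : Good χ) (β : F) :
    EmatA1 (Fintype.card F : ℝ) χ P β =
      (2 * (Fintype.card F : ℝ) ^ 2)⁻¹ • (G1 χ β + G2 χ P β) := by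
  unfold EmatA1
  rw [Fmat_eq1 P h, Fmat_eq2 P h]

theorem nfA2 (h : Good χ) (α : F) :
    EmatA2 (Fintype.card F : ℝ) χ P α =
      (2 * (Fintype.card F : ℝ) ^ 2)⁻¹ • (G1 χ α - G2 χ P α) := by
  unfold EmatA2
  rw [Fmat_eq1 P h, Fmat_eq2 P h]

theorem nfA3 (h : Good χ) (β : F) :
    EmatA3 (Fintype.card F : ℝ) χ P β =
      (2 * (Fintype.card F : ℝ) ^ 2)⁻¹ •
        ((Fintype.card F : ℝ) • G0 χ β + G3 χ P β) := by
  unfold EmatA3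
  rw [Fmat_eq0 P h, Fmat_eq3 P h]

theorem nfA4 (h : Good χ) (β : F) :
    EmatA4 (Fintype.card F : ℝ) χ P β =
      (2 * (Fintype.card F : ℝ) ^ 2)⁻¹ •
        ((Fintype.card F : ℝ) • G0 χ β - G3 χ P β) := by
  unfold EmatA4
  rw [Fmat_eq0 P h, Fmat_eq3 P h]

/-- transposes -/
theorem tKW (χ : F → F → ℝ) {W : Matrix (F ⊕ Bool) (F ⊕ Bool) ℝ} (hW : Wᵀ = W) :
    (KW χ W)ᵀ = KW χ W := by
  unfold KW
  rw [← kroneckerMap_transpose, ← kroneckerMap_transpose, PhiM_transpose, hW]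

theorem tG0 (χ : F → F → ℝ) (α : F) : (G0 χ α)ᵀ = G0 χ α := by
  unfold G0
  rw [← kroneckerMap_transpose, ← kroneckerMap_transpose, PhiM_transpose, Matrix.transpose_one,
    Matrix.transpose_one]

theorem tG1 (χ : F → F → ℝ) (α : F) : (G1 χ α)ᵀ = G1 χ α := by
  unfold G1
  rw [← kroneckerMap_transpose, ← kroneckerMap_transpose, PhiM_transpose, PhiM_transpose,
    Matrix.transpose_one]

theorem tG2 (hPsymm : ∀ a, (P a)ᵀ = P a) (α : F) : (G2 χ P α)ᵀ = G2 χ P α := by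
  unfold G2
  rw [← kroneckerMap_transpose, ← kroneckerMap_transpose, PhiM_transpose, PhiM_transpose,
    hPsymm]

theorem tG3 (hPsymm : ∀ a, (P a)ᵀ = P a) (α : F) : (G3 χ P α)ᵀ = G3 χ P α := by
  unfold G3
  rw [Matrix.transpose_sum]
  refine Finset.sum_congr rfl fun b _ => ?_
  rw [← kroneckerMap_transpose, ← kroneckerMap_transpose, PhiM_transpose, RM_transpose,
    hPsymm]

/-- sum over the nonzero subtype -/
theorem sum_sub {M : Type*} [AddCommGroup M] (f : F → M) :
    ∑ b : {β : F // β ≠ 0}, f b.1 = (∑ β : F, f β) - f 0 := by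
  have h : ∀ x : F, x ∈ Finset.univ.erase (0 : F) ↔ x ≠ 0 := by simp
  rw [← Finset.sum_subtype _ h f, Finset.sum_erase_eq_sub (Finset.mem_univ (0 : F))]

theorem sumA1 (h : Good χ) :
    ∑ β : F, EmatA1 (Fintype.card F : ℝ) χ P β =
      (2 * (Fintype.card F : ℝ) ^ 2)⁻¹ •
        ((Fintype.card F : ℝ) • G0 χ 0 + (Fintype.card F : ℝ) • G2y χ P) := by
  rw [Finset.sum_congr rfl fun β _ => nfA1 P h β, ← Finset.smul_sum, Finset.sum_add_distrib,
    sumG1 h, sumG2 P h]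
  rfl

theorem sumA2 (h : Good χ) :
    ∑ β : F, EmatA2 (Fintype.card F : ℝ) χ P β =
      (2 * (Fintype.card F : ℝ) ^ 2)⁻¹ •
        ((Fintype.card F : ℝ) • G0 χ 0 - (Fintype.card F : ℝ) • G2y χ P) := by
  rw [Finset.sum_congr rfl fun β _ => nfA2 P h β, ← Finset.smul_sum, Finset.sum_sub_distrib,
    sumG1 h, sumG2 P h]
  rfl

theorem sumA3 (h : Good χ) :
    ∑ β : F, EmatA3 (Fintype.card F : ℝ) χ P β =
      (2 * (Fintype.card F : ℝ) ^ 2)⁻¹ •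
        ((Fintype.card F : ℝ) • ((Fintype.card F : ℝ) • (1 : Matrix ((F ⊕ Bool) × F × F) ((F ⊕ Bool) × F × F) ℝ)) + ∑ α : F, G3 χ P α) := by
  rw [Finset.sum_congr rfl fun β _ => nfA3 P h β, ← Finset.smul_sum, Finset.sum_add_distrib,
    ← Finset.smul_sum, sumG0 h]

theorem sumA4 (h : Good χ) :
    ∑ β : F, EmatA4 (Fintype.card F : ℝ) χ P β =
      (2 * (Fintype.card F : ℝ) ^ 2)⁻¹ •
        ((Fintype.card F : ℝ) • ((Fintype.card F : ℝ) • (1 : Matrix ((F ⊕ Bool) × F × F) ((F ⊕ Bool) × F × F) ℝ)) - ∑ α : F, G3 χ P α) := by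
  rw [Finset.sum_congr rfl fun β _ => nfA4 P h β, ← Finset.smul_sum, Finset.sum_sub_distrib,
    ← Finset.smul_sum, sumG0 h]

end
end Stmt17

open Stmt17

set_option maxHeartbeats 3200000 in
/-- The `2^{m+2}−1` matrices `E_0, E_1, E_{β,1} (β≠0), E_{α,2} (α∈F), E_{β,3} (β≠0),
E_{β,4} (β≠0)` form a complete system of pairwise orthogonal symmetric idempotents. -/
theorem stmt17 {F : Type*} [Field F] [Fintype F] [DecidableEq F]
    (m : ℕ) (hm : 1 ≤ m) (hF : Fintype.card F = 2 ^ m)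
    (P : F ⊕ Bool → Matrix (F ⊕ Bool) (F ⊕ Bool) ℝ)
    (hPsymm : ∀ a, (P a)ᵀ = P a)
    (hP01 : ∀ a i j, P a i j = 0 ∨ P a i j = 1)
    (hPperm : ∀ a, P a * (P a)ᵀ = 1)
    (hPx : P (Sum.inr false) = 1)
    (hPsum : ∑ a : F ⊕ Bool, P a = Jmat (F ⊕ Bool))
    (χ : F → F → ℝ)
    (hχval : ∀ α β, χ α β = 1 ∨ χ α β = -1)
    (hχsym : ∀ α β, χ α β = χ β α)
    (hχmul : ∀ α β β', χ α (β + β') = χ α β * χ α β')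
    (hχsum : ∀ α, α ≠ 0 → ∑ γ : F, χ α γ = 0) :
    Fintype.card (EIdx F) = 2 ^ (m + 2) - 1 ∧
      (∀ i : EIdx F, Efam (2 ^ m : ℝ) χ P i * Efam (2 ^ m : ℝ) χ P i =
        Efam (2 ^ m : ℝ) χ P i) ∧
      (∀ i : EIdx F, (Efam (2 ^ m : ℝ) χ P i)ᵀ = Efam (2 ^ m : ℝ) χ P i) ∧
      (∀ i j : EIdx F, i ≠ j → Efam (2 ^ m : ℝ) χ P i * Efam (2 ^ m : ℝ) χ P j = 0) ∧
      (∑ i : EIdx F, Efam (2 ^ m : ℝ) χ P i = 1) := by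
  classical
  have hchar2 : ∀ x : F, x + x = 0 := by
    have hc : ((Fintype.card F : ℕ) : F) = 0 := FiniteField.cast_card_eq_zero F
    rw [hF] at hc
    push_cast at hc
    have h2 : (2 : F) = 0 := (pow_eq_zero_iff (by omega)).mp hc
    intro x
    rw [← two_mul, h2, zero_mul]
  have h : Good χ := ⟨hχval, hχsym, hχmul, hχsum, hchar2⟩
  have hPP : ∀ a, P a * P a = 1 := fun a => by have := hPperm a; rwa [hPsymm a] at this
  have hq0 : (Fintype.card F : ℝ) ≠ 0 := Nat.cast_ne_zero.mpr Fintype.card_ne_zero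
  have hq2 : (Fintype.card F : ℝ) + 2 ≠ 0 := by positivity
  have hqm : ((2 : ℝ) ^ m) = (Fintype.card F : ℝ) := by rw [hF]; push_cast; ring
  rw [hqm]
  have hPJ := P_mul_J P hP01 hPsymm hPperm
  have hJP := J_mul_P P hP01 hPsymm hPperm
  -- idempotency
  have hidem : ∀ i : EIdx F, Efam (Fintype.card F : ℝ) χ P i *
      Efam (Fintype.card F : ℝ) χ P i = Efam (Fintype.card F : ℝ) χ P i := by
    rintro (u | u | ⟨β, hβ⟩ | α | ⟨β, hβ⟩ | ⟨β, hβ⟩) <;>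
      simp only [Efam, Sum.elim_inl, Sum.elim_inr]
    · rw [nf0 P h hPsum hPx]
      simp only [Matrix.smul_mul, Matrix.mul_smul]
      simp only [mulKW h, J_mul_J, KW_smul, smul_smul]
      match_scalars <;> field_simp <;> ring
    · rw [nf1 P h hPsum hPx]
      simp only [Matrix.smul_mul, Matrix.mul_smul, sub_mul, mul_sub, add_mul, mul_add]
      simp only [mulKW h, J_mul_J, hJP, hPJ, hPP, one_mul, mul_one, KW_smul]
      match_scalars <;> field_simp <;> ring
    · rw [nfA1 P h]
      simp only [Matrix.smul_mul, Matrix.mul_smul, add_mul, mul_add]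
      simp only [mulG11 h, mulG12 P h, mulG21 P h, mulG22 P h (hPP _)]
      match_scalars <;> field_simp <;> ring
    · rw [nfA2 P h]
      simp only [Matrix.smul_mul, Matrix.mul_smul, sub_mul, mul_sub]
      simp only [mulG11 h, mulG12 P h, mulG21 P h, mulG22 P h (hPP _)]
      match_scalars <;> field_simp <;> ring
    · rw [nfA3 P h]
      simp only [Matrix.smul_mul, Matrix.mul_smul, add_mul, mul_add]
      simp only [mulG00 h, mulG03 P h, mulG30 P h, mulG33 P h hβ hPP]
      match_scalars <;> field_simp <;> ring
    · rw [nfA4 P h]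
      simp only [Matrix.smul_mul, Matrix.mul_smul, sub_mul, mul_sub]
      simp only [mulG00 h, mulG03 P h, mulG30 P h, mulG33 P h hβ hPP]
      match_scalars <;> field_simp <;> ring
  -- symmetry
  have hsymmE : ∀ i : EIdx F, (Efam (Fintype.card F : ℝ) χ P i)ᵀ =
      Efam (Fintype.card F : ℝ) χ P i := by
    rintro (u | u | ⟨β, hβ⟩ | α | ⟨β, hβ⟩ | ⟨β, hβ⟩) <;>
      simp only [Efam, Sum.elim_inl, Sum.elim_inr]
    · rw [nf0 P h hPsum hPx, Matrix.transpose_smul, tKW χ Jmat_transpose]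
    · rw [nf1 P h hPsum hPx]
      simp only [Matrix.transpose_smul, Matrix.transpose_sub, Matrix.transpose_add,
        tKW χ Jmat_transpose, tKW χ Matrix.transpose_one, tKW χ (hPsymm _)]
    · rw [nfA1 P h]
      simp only [Matrix.transpose_smul, Matrix.transpose_add, tG1, tG2 P hPsymm]
    · rw [nfA2 P h]
      simp only [Matrix.transpose_smul, Matrix.transpose_sub, tG1, tG2 P hPsymm]
    · rw [nfA3 P h]
      simp only [Matrix.transpose_smul, Matrix.transpose_add, tG0, tG3 P hPsymm]
    · rw [nfA4 P h]
      simp only [Matrix.transpose_smul, Matrix.transpose_sub, tG0, tG3 P hPsymm]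
  refine ⟨?_, hidem, hsymmE, ?_, ?_⟩
  · -- cardinality
    have h1 : Fintype.card {β : F // β ≠ 0} = 2 ^ m - 1 := by
      have h0 := Fintype.card_subtype_compl (fun β : F => β = 0)
      simp only [Fintype.card_subtype_eq] at h0
      calc Fintype.card {β : F // β ≠ 0} = Fintype.card F - 1 := h0
        _ = 2 ^ m - 1 := by rw [hF]
    have h2 : (1 : ℕ) ≤ 2 ^ m := Nat.one_le_two_pow
    have h3 : (2 : ℕ) ^ (m + 2) = 4 * 2 ^ m := by rw [pow_add]; ring
    simp only [EIdx, Fintype.card_sum, Fintype.card_unit, h1, hF, h3]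
    omega
  · -- orthogonality
    have flip : ∀ X Y : Matrix ((F ⊕ Bool) × F × F) ((F ⊕ Bool) × F × F) ℝ,
        Xᵀ = X → Yᵀ = Y → X * Y = 0 → Y * X = 0 := by
      intro X Y hX hY hXY
      have h' := congrArg Matrix.transpose hXY
      rwa [Matrix.transpose_mul, hX, hY, Matrix.transpose_zero] at h'
    have t0 : (Emat0 (Fintype.card F : ℝ) χ P)ᵀ = Emat0 (Fintype.card F : ℝ) χ P :=
      hsymmE (Sum.inl ())
    have t1 : (Emat1 (Fintype.card F : ℝ) χ P)ᵀ = Emat1 (Fintype.card F : ℝ) χ P :=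
      hsymmE (Sum.inr (Sum.inl ()))
    have tC : ∀ β : F, β ≠ 0 → (EmatA1 (Fintype.card F : ℝ) χ P β)ᵀ =
        EmatA1 (Fintype.card F : ℝ) χ P β :=
      fun β hβ => hsymmE (Sum.inr (Sum.inr (Sum.inl ⟨β, hβ⟩)))
    have tD : ∀ α : F, (EmatA2 (Fintype.card F : ℝ) χ P α)ᵀ =
        EmatA2 (Fintype.card F : ℝ) χ P α :=
      fun α => hsymmE (Sum.inr (Sum.inr (Sum.inr (Sum.inl α))))
    have tE3 : ∀ β : F, β ≠ 0 → (EmatA3 (Fintype.card F : ℝ) χ P β)ᵀ =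
        EmatA3 (Fintype.card F : ℝ) χ P β :=
      fun β hβ => hsymmE (Sum.inr (Sum.inr (Sum.inr (Sum.inr (Sum.inl ⟨β, hβ⟩)))))
    have tE4 : ∀ β : F, β ≠ 0 → (EmatA4 (Fintype.card F : ℝ) χ P β)ᵀ =
        EmatA4 (Fintype.card F : ℝ) χ P β :=
      fun β hβ => hsymmE (Sum.inr (Sum.inr (Sum.inr (Sum.inr (Sum.inr ⟨β, hβ⟩)))))
    -- pairwise products, one direction each
    have o01 : Emat0 (Fintype.card F : ℝ) χ P * Emat1 (Fintype.card F : ℝ) χ P = 0 := by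
      rw [nf0 P h hPsum hPx, nf1 P h hPsum hPx]
      simp only [Matrix.smul_mul, Matrix.mul_smul, sub_mul, mul_sub, add_mul, mul_add]
      simp only [mulKW h, J_mul_J, hJP, hPJ, hPP, one_mul, mul_one, KW_smul]
      module
    have o0C : ∀ β : F, β ≠ 0 →
        Emat0 (Fintype.card F : ℝ) χ P * EmatA1 (Fintype.card F : ℝ) χ P β = 0 := by
      intro β hβ
      rw [nf0 P h hPsum hPx, nfA1 P h]
      simp only [KW, G1, G2, Matrix.smul_mul, Matrix.mul_smul, mul_add,
        Z2 h (Ne.symm hβ), smul_zero, add_zero, zero_add]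
    have o0D : ∀ α : F,
        Emat0 (Fintype.card F : ℝ) χ P * EmatA2 (Fintype.card F : ℝ) χ P α = 0 := by
      intro α
      rw [nf0 P h hPsum hPx, nfA2 P h]
      by_cases hα : α = 0
      · subst hα
        rw [G1_zero χ, G2_zero P]
        simp only [Matrix.smul_mul, Matrix.mul_smul, mul_sub]
        simp only [mulKW h, hJP, mul_one]
        module
      · simp only [KW, G1, G2, Matrix.smul_mul, Matrix.mul_smul, mul_sub,
          Z2 h (Ne.symm hα), smul_zero, sub_zero, sub_self]
    have o0E3 : ∀ β : F, β ≠ 0 →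
        Emat0 (Fintype.card F : ℝ) χ P * EmatA3 (Fintype.card F : ℝ) χ P β = 0 := by
      intro β hβ
      rw [nf0 P h hPsum hPx, nfA3 P h]
      simp only [KW, G0, Matrix.smul_mul, Matrix.mul_smul, mul_add,
        Z1 h (Ne.symm hβ), zG3r P h (Ne.symm hβ), smul_zero, add_zero, zero_add]
    have o0E4 : ∀ β : F, β ≠ 0 →
        Emat0 (Fintype.card F : ℝ) χ P * EmatA4 (Fintype.card F : ℝ) χ P β = 0 := by
      intro β hβ
      rw [nf0 P h hPsum hPx, nfA4 P h]
      simp only [KW, G0, Matrix.smul_mul, Matrix.mul_smul, mul_sub,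
        Z1 h (Ne.symm hβ), zG3r P h (Ne.symm hβ), smul_zero, sub_zero, sub_self]
    have o1C : ∀ β : F, β ≠ 0 →
        Emat1 (Fintype.card F : ℝ) χ P * EmatA1 (Fintype.card F : ℝ) χ P β = 0 := by
      intro β hβ
      rw [nf1 P h hPsum hPx, nfA1 P h]
      simp only [KW, G1, G2, Matrix.smul_mul, Matrix.mul_smul, mul_add, add_mul, sub_mul,
        Z2 h (Ne.symm hβ), smul_zero, add_zero, zero_add, sub_zero, sub_self]
    have o1D : ∀ α : F,
        Emat1 (Fintype.card F : ℝ) χ P * EmatA2 (Fintype.card F : ℝ) χ P α = 0 := by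
      intro α
      rw [nf1 P h hPsum hPx, nfA2 P h]
      by_cases hα : α = 0
      · subst hα
        rw [G1_zero χ, G2_zero P]
        simp only [Matrix.smul_mul, Matrix.mul_smul, sub_mul, mul_sub, add_mul, mul_add]
        simp only [mulKW h, J_mul_J, hJP, hPJ, hPP, one_mul, mul_one, KW_smul]
        module
      · simp only [KW, G1, G2, Matrix.smul_mul, Matrix.mul_smul, sub_mul, mul_sub, add_mul,
          mul_add, Z2 h (Ne.symm hα), smul_zero, add_zero, zero_add, sub_zero, sub_self]
    have o1E3 : ∀ β : F, β ≠ 0 →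
        Emat1 (Fintype.card F : ℝ) χ P * EmatA3 (Fintype.card F : ℝ) χ P β = 0 := by
      intro β hβ
      rw [nf1 P h hPsum hPx, nfA3 P h]
      simp only [KW, G0, Matrix.smul_mul, Matrix.mul_smul, mul_add, add_mul, sub_mul,
        Z1 h (Ne.symm hβ), zG3r P h (Ne.symm hβ), smul_zero, add_zero, zero_add, sub_zero,
        sub_self]
    have o1E4 : ∀ β : F, β ≠ 0 →
        Emat1 (Fintype.card F : ℝ) χ P * EmatA4 (Fintype.card F : ℝ) χ P β = 0 := by
      intro β hβ
      rw [nf1 P h hPsum hPx, nfA4 P h]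
      simp only [KW, G0, Matrix.smul_mul, Matrix.mul_smul, mul_sub, add_mul, sub_mul,
        Z1 h (Ne.symm hβ), zG3r P h (Ne.symm hβ), smul_zero, add_zero, zero_add, sub_zero,
        zero_sub, neg_zero, sub_self]
    have oCC : ∀ β β' : F, β ≠ β' →
        EmatA1 (Fintype.card F : ℝ) χ P β * EmatA1 (Fintype.card F : ℝ) χ P β' = 0 := by
      intro β β' hne
      rw [nfA1 P h, nfA1 P h]
      simp only [G1, G2, Matrix.smul_mul, Matrix.mul_smul, mul_add, add_mul,
        Z2 h hne, smul_zero, add_zero, zero_add]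
    have oCD : ∀ β α : F,
        EmatA1 (Fintype.card F : ℝ) χ P β * EmatA2 (Fintype.card F : ℝ) χ P α = 0 := by
      intro β α
      rw [nfA1 P h, nfA2 P h]
      by_cases hba : β = α
      · subst hba
        simp only [Matrix.smul_mul, Matrix.mul_smul, sub_mul, mul_sub, add_mul, mul_add]
        simp only [mulG11 h, mulG12 P h, mulG21 P h, mulG22 P h (hPP _)]
        module
      · simp only [G1, G2, Matrix.smul_mul, Matrix.mul_smul, sub_mul, mul_sub, add_mul,
          mul_add, Z2 h hba, smul_zero, add_zero, zero_add, sub_zero, sub_self]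
    have oCE3 : ∀ β β' : F, β' ≠ 0 →
        EmatA1 (Fintype.card F : ℝ) χ P β * EmatA3 (Fintype.card F : ℝ) χ P β' = 0 := by
      intro β β' hβ'
      rw [nfA1 P h, nfA3 P h]
      simp only [G0, G1, G2, Matrix.smul_mul, Matrix.mul_smul, mul_add, add_mul,
        Z1 h (Ne.symm hβ'), zG3r P h (Ne.symm hβ'), smul_zero, add_zero, zero_add]
    have oCE4 : ∀ β β' : F, β' ≠ 0 →
        EmatA1 (Fintype.card F : ℝ) χ P β * EmatA4 (Fintype.card F : ℝ) χ P β' = 0 := by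
      intro β β' hβ'
      rw [nfA1 P h, nfA4 P h]
      simp only [G0, G1, G2, Matrix.smul_mul, Matrix.mul_smul, mul_sub, add_mul,
        Z1 h (Ne.symm hβ'), zG3r P h (Ne.symm hβ'), smul_zero, add_zero, zero_add, sub_zero,
        sub_self]
    have oDD : ∀ α α' : F, α ≠ α' →
        EmatA2 (Fintype.card F : ℝ) χ P α * EmatA2 (Fintype.card F : ℝ) χ P α' = 0 := by
      intro α α' hne
      rw [nfA2 P h, nfA2 P h]
      simp only [G1, G2, Matrix.smul_mul, Matrix.mul_smul, mul_sub, sub_mul,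
        Z2 h hne, smul_zero, sub_zero, sub_self]
    have oDE3 : ∀ α β : F, β ≠ 0 →
        EmatA2 (Fintype.card F : ℝ) χ P α * EmatA3 (Fintype.card F : ℝ) χ P β = 0 := by
      intro α β hβ
      rw [nfA2 P h, nfA3 P h]
      simp only [G0, G1, G2, Matrix.smul_mul, Matrix.mul_smul, mul_add, sub_mul,
        Z1 h (Ne.symm hβ), zG3r P h (Ne.symm hβ), smul_zero, add_zero, zero_add, sub_self]
    have oDE4 : ∀ α β : F, β ≠ 0 →
        EmatA2 (Fintype.card F : ℝ) χ P α * EmatA4 (Fintype.card F : ℝ) χ P β = 0 := by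
      intro α β hβ
      rw [nfA2 P h, nfA4 P h]
      simp only [G0, G1, G2, Matrix.smul_mul, Matrix.mul_smul, mul_sub, sub_mul,
        Z1 h (Ne.symm hβ), zG3r P h (Ne.symm hβ), smul_zero, sub_zero, sub_self]
    have oE3E3 : ∀ β β' : F, β ≠ β' →
        EmatA3 (Fintype.card F : ℝ) χ P β * EmatA3 (Fintype.card F : ℝ) χ P β' = 0 := by
      intro β β' hne
      rw [nfA3 P h, nfA3 P h]
      simp only [G0, Matrix.smul_mul, Matrix.mul_smul, mul_add, add_mul,
        Z1 h hne, zG3r P h hne, zG3l P h hne, zG33 P h hne, smul_zero, add_zero, zero_add]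
    have oE3E4 : ∀ β β' : F, β ≠ 0 → β' ≠ 0 →
        EmatA3 (Fintype.card F : ℝ) χ P β * EmatA4 (Fintype.card F : ℝ) χ P β' = 0 := by
      intro β β' hβ hβ'
      rw [nfA3 P h, nfA4 P h]
      by_cases hbb : β = β'
      · subst hbb
        simp only [Matrix.smul_mul, Matrix.mul_smul, sub_mul, mul_sub, add_mul, mul_add]
        simp only [mulG00 h, mulG03 P h, mulG30 P h, mulG33 P h hβ hPP]
        module
      · simp only [G0, Matrix.smul_mul, Matrix.mul_smul, sub_mul, mul_sub, add_mul, mul_add,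
          Z1 h hbb, zG3r P h hbb, zG3l P h hbb, zG33 P h hbb, smul_zero, add_zero, zero_add,
          sub_zero, zero_sub, neg_zero, sub_self]
    have oE4E4 : ∀ β β' : F, β ≠ β' →
        EmatA4 (Fintype.card F : ℝ) χ P β * EmatA4 (Fintype.card F : ℝ) χ P β' = 0 := by
      intro β β' hne
      rw [nfA4 P h, nfA4 P h]
      simp only [G0, Matrix.smul_mul, Matrix.mul_smul, mul_sub, sub_mul,
        Z1 h hne, zG3r P h hne, zG3l P h hne, zG33 P h hne, smul_zero, sub_zero, sub_self]
    rintro (u | u | ⟨β, hβ⟩ | α | ⟨β, hβ⟩ | ⟨β, hβ⟩) (u' | u' | ⟨β', hβ'⟩ | α' | ⟨β', hβ'⟩ | ⟨β', hβ'⟩) hij <;>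
      simp only [Efam, Sum.elim_inl, Sum.elim_inr]
    · exact absurd (congrArg Sum.inl (Subsingleton.elim u u')) hij
    · exact o01
    · exact o0C β' hβ'
    · exact o0D α'
    · exact o0E3 β' hβ'
    · exact o0E4 β' hβ'
    · exact flip _ _ t0 t1 o01
    · exact absurd (congrArg (fun x => Sum.inr (Sum.inl x)) (Subsingleton.elim u u')) hij
    · exact o1C β' hβ'
    · exact o1D α'
    · exact o1E3 β' hβ'
    · exact o1E4 β' hβ'
    · exact flip _ _ t0 (tC β hβ) (o0C β hβ)
    · exact flip _ _ t1 (tC β hβ) (o1C β hβ)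
    · exact oCC β β' (by intro e; apply hij; subst e; rfl)
    · exact oCD β α'
    · exact oCE3 β β' hβ'
    · exact oCE4 β β' hβ'
    · exact flip _ _ t0 (tD α) (o0D α)
    · exact flip _ _ t1 (tD α) (o1D α)
    · exact flip _ _ (tC β' hβ') (tD α) (oCD β' α)
    · exact oDD α α' (by intro e; apply hij; subst e; rfl)
    · exact oDE3 α β' hβ'
    · exact oDE4 α β' hβ'
    · exact flip _ _ t0 (tE3 β hβ) (o0E3 β hβ)
    · exact flip _ _ t1 (tE3 β hβ) (o1E3 β hβ)
    · exact flip _ _ (tC β' hβ') (tE3 β hβ) (oCE3 β' β hβ)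
    · exact flip _ _ (tD α') (tE3 β hβ) (oDE3 α' β hβ)
    · exact oE3E3 β β' (by intro e; apply hij; subst e; rfl)
    · exact oE3E4 β β' hβ hβ'
    · exact flip _ _ t0 (tE4 β hβ) (o0E4 β hβ)
    · exact flip _ _ t1 (tE4 β hβ) (o1E4 β hβ)
    · exact flip _ _ (tC β' hβ') (tE4 β hβ) (oCE4 β' β hβ)
    · exact flip _ _ (tD α') (tE4 β hβ) (oDE4 α' β hβ)
    · exact flip _ _ (tE3 β' hβ') (tE4 β hβ) (oE3E4 β' β hβ' hβ)
    · exact oE4E4 β β' (by intro e; apply hij; subst e; rfl)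
  · -- sum
    simp only [Fintype.sum_sum_type, Efam, Sum.elim_inl, Sum.elim_inr, Finset.univ_unique,
      Finset.sum_singleton]
    rw [sum_sub (fun β => EmatA1 (Fintype.card F : ℝ) χ P β),
      sum_sub (fun β => EmatA3 (Fintype.card F : ℝ) χ P β),
      sum_sub (fun β => EmatA4 (Fintype.card F : ℝ) χ P β),
      sumA1 P h, sumA2 P h, sumA3 P h, sumA4 P h, nf0 P h hPsum hPx, nf1 P h hPsum hPx,
      nfA1 P h 0, nfA3 P h 0, nfA4 P h 0, G1_zero χ, G2_zero P]
    match_scalars <;> field_simp <;> ring
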